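/- For fixed t > 0, n ≥ 2 and every r₀ > 0 with Z(r) = coth r − 1/r, and for all r > 0: (r/(2t) + Z(r))² ≤ (1 + 2(Z'(r₀) + Z(r₀)/r₀)t + 4Z(r₀)Z'(r₀)t²/r₀)·(r²/(4t²) − r₀²/(4t²)) + (r₀/(2t) + Z(r₀))². -/

import Mathlib

/-!
With `X = r² / (4t²)` and `Y = (r / (2t) + Z r)²`, the slope `dY/dX` along `r > 0` is
`g r = 1 + 2 (Z' r + Z r / r) t + 4 Z r Z' r t² / r`, and the claim says that `Y` lies below its
tangent line at `r₀`. This holds as soon as `g` is antitone, i.e. `Y` is concave in `X`.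
Since `Z`, `Z'` and `Z / r` are nonnegative, it suffices that `Z'` and `Z / r` are antitone.
The first is Lazarević's inequality `cosh x ≤ (sinh x / x)³`: with `a = cosh x ^ (1/3)`, the
function `sinh x / a - x` has derivative `(a² - 1)² (2a² + 1) / (3a⁴) ≥ 0`. The second is
`2 sinh² x ≤ x sinh x cosh x + x²`, whose difference has second derivative
`4 sinh x (x cosh x - sinh x) ≥ 0`.
-/

noncomputable def Z : ℝ → ℝ := fun r => Real.cosh r / Real.sinh r - 1 / r

open Real Set

section MonotoneOfDeriv

variable {s : Set ℝ} {f f' : ℝ → ℝ}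

lemma monotoneOn_of_hasDerivAt_nonneg (hs : Convex ℝ s) (hf : ∀ x ∈ s, HasDerivAt f (f' x) x)
    (hf' : ∀ x ∈ s, 0 ≤ f' x) : MonotoneOn f s :=
  monotoneOn_of_deriv_nonneg hs (fun x hx ↦ (hf x hx).continuousAt.continuousWithinAt)
    (fun x hx ↦ (hf x (interior_subset hx)).differentiableAt.differentiableWithinAt)
    fun x hx ↦ (hf x (interior_subset hx)).deriv ▸ hf' x (interior_subset hx)

lemma antitoneOn_of_hasDerivAt_nonpos (hs : Convex ℝ s) (hf : ∀ x ∈ s, HasDerivAt f (f' x) x)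
    (hf' : ∀ x ∈ s, f' x ≤ 0) : AntitoneOn f s :=
  antitoneOn_of_deriv_nonpos hs (fun x hx ↦ (hf x hx).continuousAt.continuousWithinAt)
    (fun x hx ↦ (hf x (interior_subset hx)).differentiableAt.differentiableWithinAt)
    fun x hx ↦ (hf x (interior_subset hx)).deriv ▸ hf' x (interior_subset hx)

lemma nonneg_of_hasDerivAt_nonneg (hf : ∀ x ∈ Ici 0, HasDerivAt f (f' x) x)
    (hf' : ∀ x ∈ Ici 0, 0 ≤ f' x) (hf0 : f 0 = 0) ⦃x : ℝ⦄ (hx : 0 ≤ x) : 0 ≤ f x :=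
  hf0 ▸ monotoneOn_of_hasDerivAt_nonneg (convex_Ici 0) hf hf' self_mem_Ici hx hx

end MonotoneOfDeriv

namespace Real

variable {x : ℝ}

lemma sinh_le_mul_cosh (hx : 0 ≤ x) : sinh x ≤ x * cosh x := by
  have hd (y : ℝ) : HasDerivAt (fun y ↦ y * cosh y - sinh y) (y * sinh y) y :=
    (((hasDerivAt_id' y).fun_mul (hasDerivAt_cosh y)).fun_sub (hasDerivAt_sinh y)).congr_deriv
      (by ring)
  have h := nonneg_of_hasDerivAt_nonneg (fun y _ ↦ hd y)
    (fun y hy ↦ mul_nonneg hy (sinh_nonneg_iff.mpr hy)) (by simp) hx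
  linarith

lemma two_mul_sinh_sq_le (hx : 0 ≤ x) : 2 * sinh x ^ 2 ≤ x * sinh x * cosh x + x ^ 2 := by
  have hd₂ (y : ℝ) :
      HasDerivAt (fun y ↦ y * (cosh y ^ 2 + sinh y ^ 2) + 2 * y - 3 * (sinh y * cosh y))
        (4 * sinh y * (y * cosh y - sinh y)) y :=
    ((((hasDerivAt_id' y).fun_mul (((hasDerivAt_cosh y).fun_pow 2).fun_add
      ((hasDerivAt_sinh y).fun_pow 2))).fun_add ((hasDerivAt_id' y).const_mul 2)).fun_sub
      (((hasDerivAt_sinh y).fun_mul (hasDerivAt_cosh y)).const_mul 3)).congr_deriv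
      (by push_cast; linear_combination (-2) * cosh_sq y)
  have hd₁ (y : ℝ) : HasDerivAt (fun y ↦ y * sinh y * cosh y + y ^ 2 - 2 * sinh y ^ 2)
      (y * (cosh y ^ 2 + sinh y ^ 2) + 2 * y - 3 * (sinh y * cosh y)) y :=
    (((((hasDerivAt_id' y).fun_mul (hasDerivAt_sinh y)).fun_mul (hasDerivAt_cosh y)).fun_add
      (hasDerivAt_pow 2 y)).fun_sub (((hasDerivAt_sinh y).fun_pow 2).const_mul 2)).congr_deriv
      (by push_cast; ring)
  have h₂ := nonneg_of_hasDerivAt_nonneg (fun y _ ↦ hd₂ y)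
    (fun y hy ↦ mul_nonneg (mul_nonneg (by norm_num) (sinh_nonneg_iff.mpr hy))
      (sub_nonneg.mpr (sinh_le_mul_cosh hy))) (by simp)
  have h₁ := nonneg_of_hasDerivAt_nonneg (fun y _ ↦ hd₁ y) (fun _ hy ↦ h₂ hy) (by simp) hx
  linarith

lemma mul_cosh_rpow_one_third_le_sinh (hx : 0 ≤ x) : x * cosh x ^ (1 / 3 : ℝ) ≤ sinh x := by
  set a : ℝ → ℝ := fun y ↦ cosh y ^ (1 / 3 : ℝ) with ha_def
  have ha_pos (y : ℝ) : 0 < a y := rpow_pos_of_pos (cosh_pos y) _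
  have ha_cube (y : ℝ) : a y ^ 3 = cosh y := by
    rw [ha_def, ← rpow_natCast, ← rpow_mul (cosh_pos y).le]; norm_num
  have ha (y : ℝ) : HasDerivAt a (sinh y / (3 * a y ^ 2)) y := by
    refine ((hasDerivAt_cosh y).rpow_const (p := 1 / 3) (Or.inl (cosh_pos y).ne')).congr_deriv ?_
    rw [rpow_sub_one (cosh_pos y).ne', show cosh y ^ (1 / 3 : ℝ) = a y from rfl, ← ha_cube y]
    field_simp
  have hd (y : ℝ) : HasDerivAt (fun y ↦ sinh y / a y - y)
      ((a y ^ 2 - 1) ^ 2 * (2 * a y ^ 2 + 1) / (3 * a y ^ 4)) y := by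
    refine (((hasDerivAt_sinh y).fun_div (ha y) (ha_pos y).ne').fun_sub
      (hasDerivAt_id' y)).congr_deriv ?_
    have hs : sinh y ^ 2 = a y ^ 6 - 1 := by
      have := cosh_sq y
      rw [← ha_cube y] at this
      linear_combination -this
    field_simp [(ha_pos y).ne']
    linear_combination (-1) * hs - 3 * a y ^ 3 * ha_cube y
  have h := nonneg_of_hasDerivAt_nonneg (fun y _ ↦ hd y) (fun y _ ↦ by positivity) (by simp) hx
  have := (le_div_iff₀ (ha_pos x)).mp (sub_nonneg.mp h)
  linarith

lemma pow_three_mul_cosh_le_sinh_pow_three (hx : 0 ≤ x) : x ^ 3 * cosh x ≤ sinh x ^ 3 := by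
  have h := pow_le_pow_left₀ (by positivity) (mul_cosh_rpow_one_third_le_sinh hx) 3
  rw [mul_pow, ← rpow_natCast (cosh x ^ _), ← rpow_mul (cosh_pos x).le] at h
  norm_num at h
  exact h

end Real

noncomputable def Z' (r : ℝ) : ℝ := 1 / r ^ 2 - 1 / sinh r ^ 2

noncomputable def Z'' (r : ℝ) : ℝ := 2 * cosh r / sinh r ^ 3 - 2 / r ^ 3

section Z

variable {r : ℝ}

lemma hasDerivAt_Z (hr : 0 < r) : HasDerivAt Z (Z' r) r := by
  have hs := (sinh_pos_iff.mpr hr).ne'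
  refine (((hasDerivAt_cosh r).fun_div (hasDerivAt_sinh r) hs).fun_sub
    ((hasDerivAt_const r (1 : ℝ)).fun_div (hasDerivAt_id' r) hr.ne')).congr_deriv ?_
  rw [Z']
  field_simp
  linear_combination -r ^ 2 * cosh_sq r

lemma hasDerivAt_Z' (hr : 0 < r) : HasDerivAt Z' (Z'' r) r := by
  have hs := (sinh_pos_iff.mpr hr).ne'
  refine (((hasDerivAt_const r (1 : ℝ)).fun_div (hasDerivAt_pow 2 r)
    (pow_ne_zero 2 hr.ne')).fun_sub ((hasDerivAt_const r (1 : ℝ)).fun_div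
      ((hasDerivAt_sinh r).fun_pow 2) (pow_ne_zero 2 hs))).congr_deriv ?_
  rw [Z'']
  field_simp
  ring

lemma Z_nonneg (hr : 0 < r) : 0 ≤ Z r :=
  sub_nonneg.mpr <| (div_le_div_iff₀ hr (sinh_pos_iff.mpr hr)).mpr <| by
    linarith [sinh_le_mul_cosh hr.le]

lemma Z'_nonneg (hr : 0 < r) : 0 ≤ Z' r :=
  sub_nonneg.mpr <| one_div_le_one_div_of_le (by positivity) <|
    pow_le_pow_left₀ hr.le (self_le_sinh_iff.mpr hr.le) 2

lemma Z''_nonpos (hr : 0 < r) : Z'' r ≤ 0 :=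
  sub_nonpos.mpr <| (div_le_div_iff₀ (pow_pos (sinh_pos_iff.mpr hr) 3) (pow_pos hr 3)).mpr <| by
    linarith [pow_three_mul_cosh_le_sinh_pow_three hr.le]

lemma antitoneOn_Z' : AntitoneOn Z' (Ioi 0) :=
  antitoneOn_of_hasDerivAt_nonpos (convex_Ioi 0) (fun _ hr ↦ hasDerivAt_Z' hr)
    fun _ hr ↦ Z''_nonpos hr

lemma antitoneOn_Z_div_self : AntitoneOn (fun r ↦ Z r / r) (Ioi 0) := by
  refine antitoneOn_of_hasDerivAt_nonpos (convex_Ioi 0)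
    (fun r hr ↦ (hasDerivAt_Z hr).fun_div (hasDerivAt_id' r) (ne_of_gt hr))
    fun r (hr : 0 < r) ↦ ?_
  have hs := sinh_pos_iff.mpr hr
  have key : (Z' r * r - Z r * 1) * (r * sinh r ^ 2)
      = 2 * sinh r ^ 2 - r * sinh r * cosh r - r ^ 2 := by
    rw [Z', Z]
    field_simp
    ring
  have hpos : 0 < r * sinh r ^ 2 := by positivity
  refine div_nonpos_of_nonpos_of_nonneg (nonpos_of_mul_nonpos_left ?_ hpos) (sq_nonneg r)
  linarith [two_mul_sinh_sq_le hr.le]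

end Z

theorem le_mul_sub_add_of_hasDerivAt_antitoneOn {s : Set ℝ} (hs : Convex ℝ s)
    {F G g G' : ℝ → ℝ} (hF : ∀ x ∈ s, HasDerivAt F (g x * G' x) x)
    (hG : ∀ x ∈ s, HasDerivAt G (G' x) x) (hG' : ∀ x ∈ s, 0 ≤ G' x) (hg : AntitoneOn g s)
    {x₀ x : ℝ} (hx₀ : x₀ ∈ s) (hx : x ∈ s) :
    F x ≤ g x₀ * (G x - G x₀) + F x₀ := by
  set h : ℝ → ℝ := fun y ↦ g x₀ * (G y - G x₀) + F x₀ - F y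
  have hh (y : ℝ) (hy : y ∈ s) : HasDerivAt h ((g x₀ - g y) * G' y) y :=
    ((((hG y hy).sub_const (G x₀)).const_mul (g x₀)).add_const (F x₀)).fun_sub (hF y hy)
      |>.congr_deriv (by ring)
  suffices h x₀ ≤ h x by simpa [h] using this
  rcases le_total x x₀ with hle | hle
  · refine antitoneOn_of_hasDerivAt_nonpos (hs.inter (convex_Iic x₀)) (fun y hy ↦ hh y hy.1)
      (fun y hy ↦ ?_) ⟨hx, hle⟩ ⟨hx₀, mem_Iic.mpr le_rfl⟩ hle
    exact mul_nonpos_of_nonpos_of_nonneg (sub_nonpos.mpr (hg hy.1 hx₀ hy.2)) (hG' y hy.1)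
  · refine monotoneOn_of_hasDerivAt_nonneg (hs.inter (convex_Ici x₀)) (fun y hy ↦ hh y hy.1)
      (fun y hy ↦ ?_) ⟨hx₀, mem_Ici.mpr le_rfl⟩ ⟨hx, hle⟩ hle
    exact mul_nonneg (sub_nonneg.mpr (hg hx₀ hy.1 hy.2)) (hG' y hy.1)

lemma antitoneOn_tangent_slope {t : ℝ} (ht : 0 ≤ t) :
    AntitoneOn (fun r ↦ 1 + 2 * (Z' r + Z r / r) * t + 4 * Z r * Z' r * t ^ 2 / r) (Ioi 0) := by
  intro x (hx : 0 < x) y hy hxy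
  have hZ' : Z' y ≤ Z' x := antitoneOn_Z' hx hy hxy
  have hZ : Z y / y ≤ Z x / x := antitoneOn_Z_div_self hx hy hxy
  have hprod : Z' y * (Z y / y) ≤ Z' x * (Z x / x) :=
    mul_le_mul hZ' hZ (div_nonneg (Z_nonneg hy) (le_of_lt hy)) (Z'_nonneg hx)
  have h₁ := mul_le_mul_of_nonneg_left (add_le_add hZ' hZ) ht
  have h₂ := mul_le_mul_of_nonneg_left hprod (sq_nonneg t)
  linear_combination 2 * h₁ + 4 * h₂

theorem stmt_14_general (t : ℝ) (ht : 0 < t) (r₀ : ℝ) (hr₀ : 0 < r₀)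
    (r : ℝ) (hr : 0 < r) :
    (r / (2 * t) + Z r) ^ 2
      ≤ (1 + 2 * (deriv Z r₀ + Z r₀ / r₀) * t + 4 * Z r₀ * deriv Z r₀ * t ^ 2 / r₀)
          * (r ^ 2 / (4 * t ^ 2) - r₀ ^ 2 / (4 * t ^ 2))
        + (r₀ / (2 * t) + Z r₀) ^ 2 := by
  rw [(hasDerivAt_Z hr₀).deriv]
  refine le_mul_sub_add_of_hasDerivAt_antitoneOn (convex_Ioi 0)
    (F := fun x ↦ (x / (2 * t) + Z x) ^ 2) (G := fun x ↦ x ^ 2 / (4 * t ^ 2))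
    (G' := fun x ↦ x / (2 * t ^ 2)) (fun x (hx : 0 < x) ↦ ?_) (fun x _ ↦ ?_)
    (fun x (hx : 0 < x) ↦ by positivity) (antitoneOn_tangent_slope ht.le) hr₀ hr
  · refine HasDerivAt.congr_deriv
      ((((hasDerivAt_id' x).div_const (2 * t)).fun_add (hasDerivAt_Z hx)).fun_pow 2) ?_
    norm_num
    field_simp
    ring
  · refine ((hasDerivAt_pow 2 x).div_const (4 * t ^ 2)).congr_deriv ?_
    field_simp
    ring

theorem stmt_14 (n : ℕ) (hn : 2 ≤ n) (t : ℝ) (ht : 0 < t) (r₀ : ℝ) (hr₀ : 0 < r₀)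
    (r : ℝ) (hr : 0 < r) :
    (r / (2 * t) + Z r) ^ 2
      ≤ (1 + 2 * (deriv Z r₀ + Z r₀ / r₀) * t + 4 * Z r₀ * deriv Z r₀ * t ^ 2 / r₀)
          * (r ^ 2 / (4 * t ^ 2) - r₀ ^ 2 / (4 * t ^ 2))
        + (r₀ / (2 * t) + Z r₀) ^ 2 :=
  stmt_14_general t ht r₀ hr₀ r hr
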